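/- For every k ∈ H one has ∑ S(S(k₍₂₎)) · S̃(k₍₁₎) = δ(k) · 1 in H. -/

import Mathlib

/-!
Let `H` be a Hopf algebra over `ℂ` with coproduct `Δ = Coalgebra.comul`, counit
`ε = Coalgebra.counit`, antipode `S = HopfAlgebra.antipode` and unit `1`.  We fix a
character `δ : H →ₐ[ℂ] ℂ`.  The `δ`-twisted antipode is the linear map
`S̃(h) = ∑ δ(h₍₁₎) S(h₍₂₎)`.
-/

open TensorProduct

noncomputable section

variable (H : Type) [Ring H] [HopfAlgebra ℂ H]

/-- The `δ`-twisted antipode `S̃(h) = ∑ δ(h₍₁₎) S(h₍₂₎)`. -/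
def twistedAntipode (δ : H →ₐ[ℂ] ℂ) : H →ₗ[ℂ] H :=
  (TensorProduct.lid ℂ H).toLinearMap ∘ₗ
    (TensorProduct.map δ.toLinearMap (HopfAlgebra.antipode (R := ℂ))) ∘ₗ
      Coalgebra.comul

section Aux

open Coalgebra HopfAlgebra LinearMap
open scoped Coalgebra

variable {C : Type} [AddCommGroup C] [Module ℂ C] [Coalgebra ℂ C]

lemma sum_counit_smul_left {c : C} {ι : Type*} (r : Coalgebra.Repr ℂ c ι) :
    ∑ i ∈ r.index, Coalgebra.counit (R := ℂ) (r.right i) • r.left i = c := by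
  have h := congrArg (TensorProduct.rid ℂ C) (Coalgebra.sum_tmul_counit_eq r)
  rw [map_sum] at h
  simp only [TensorProduct.rid_tmul, one_smul] at h
  exact h

lemma sum_counit_smul_right {c : C} {ι : Type*} (r : Coalgebra.Repr ℂ c ι) :
    ∑ i ∈ r.index, Coalgebra.counit (R := ℂ) (r.left i) • r.right i = c := by
  have h := congrArg (TensorProduct.lid ℂ C) (Coalgebra.sum_counit_tmul_eq r)
  rw [map_sum] at h
  simp only [TensorProduct.lid_tmul, one_smul] at h
  exact h

/-- Convolution product on linear maps from a coalgebra `C` to `H`. -/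
def conv (f g : C →ₗ[ℂ] H) : C →ₗ[ℂ] H :=
  LinearMap.mul' ℂ H ∘ₗ TensorProduct.map f g ∘ₗ Coalgebra.comul

/-- Unit of the convolution algebra. -/
def convUnit : C →ₗ[ℂ] H := Algebra.linearMap ℂ H ∘ₗ Coalgebra.counit

lemma conv_repr (f g : C →ₗ[ℂ] H) {c : C} {ι : Type*} (r : Coalgebra.Repr ℂ c ι) :
    conv H f g c = ∑ i ∈ r.index, f (r.left i) * g (r.right i) := by
  simp [conv, ← r.eq, map_sum]

lemma conv_convUnit (f : C →ₗ[ℂ] H) : conv H f (convUnit H) = f := by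
  ext c
  rw [conv_repr H f _ (ℛ ℂ c)]
  calc ∑ i ∈ (ℛ ℂ c).index, f ((ℛ ℂ c).left i) * convUnit H ((ℛ ℂ c).right i)
      = ∑ i ∈ (ℛ ℂ c).index,
          f (Coalgebra.counit (R := ℂ) ((ℛ ℂ c).right i) • (ℛ ℂ c).left i) := by
        apply Finset.sum_congr rfl
        intro i _
        simp [convUnit, Algebra.smul_def, Algebra.commutes]
    _ = f c := by rw [← map_sum, sum_counit_smul_left]

lemma convUnit_conv (f : C →ₗ[ℂ] H) : conv H (convUnit H) f = f := by
  ext c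
  rw [conv_repr H _ f (ℛ ℂ c)]
  calc ∑ i ∈ (ℛ ℂ c).index, convUnit H ((ℛ ℂ c).left i) * f ((ℛ ℂ c).right i)
      = ∑ i ∈ (ℛ ℂ c).index,
          f (Coalgebra.counit (R := ℂ) ((ℛ ℂ c).left i) • (ℛ ℂ c).right i) := by
        apply Finset.sum_congr rfl
        intro i _
        simp [convUnit, Algebra.smul_def]
    _ = f c := by rw [← map_sum, sum_counit_smul_right]

lemma conv_assoc (f g h : C →ₗ[ℂ] H) :
    conv H (conv H f g) h = conv H f (conv H g h) := by
  ext c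
  have key := congrArg
    (LinearMap.mul' ℂ H ∘ₗ TensorProduct.map f (LinearMap.mul' ℂ H ∘ₗ TensorProduct.map g h))
    (Coalgebra.sum_tmul_tmul_eq (ℛ ℂ c) (fun i => ℛ ℂ ((ℛ ℂ c).left i))
      (fun i => ℛ ℂ ((ℛ ℂ c).right i)))
  simp only [map_sum, LinearMap.comp_apply, TensorProduct.map_tmul, LinearMap.mul'_apply] at key
  calc conv H (conv H f g) h c
      = ∑ i ∈ (ℛ ℂ c).index, conv H f g ((ℛ ℂ c).left i) * h ((ℛ ℂ c).right i) :=
        conv_repr H _ _ (ℛ ℂ c)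
    _ = ∑ i ∈ (ℛ ℂ c).index, ∑ j ∈ (ℛ ℂ ((ℛ ℂ c).left i)).index,
          f ((ℛ ℂ ((ℛ ℂ c).left i)).left j) *
            (g ((ℛ ℂ ((ℛ ℂ c).left i)).right j) * h ((ℛ ℂ c).right i)) := by
        apply Finset.sum_congr rfl
        intro i _
        rw [conv_repr H f g (ℛ ℂ ((ℛ ℂ c).left i)), Finset.sum_mul]
        simp [mul_assoc]
    _ = ∑ i ∈ (ℛ ℂ c).index, ∑ j ∈ (ℛ ℂ ((ℛ ℂ c).right i)).index,
          f ((ℛ ℂ c).left i) *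
            (g ((ℛ ℂ ((ℛ ℂ c).right i)).left j) * h ((ℛ ℂ ((ℛ ℂ c).right i)).right j)) := key
    _ = ∑ i ∈ (ℛ ℂ c).index, f ((ℛ ℂ c).left i) * conv H g h ((ℛ ℂ c).right i) := by
        apply Finset.sum_congr rfl
        intro i _
        rw [conv_repr H g h (ℛ ℂ ((ℛ ℂ c).right i)), Finset.mul_sum]
    _ = conv H f (conv H g h) c := (conv_repr H _ _ (ℛ ℂ c)).symm

lemma comul_tmul (a b : H) :
    Coalgebra.comul (R := ℂ) (a ⊗ₜ[ℂ] b) =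
      ∑ i ∈ (ℛ ℂ a).index, ∑ j ∈ (ℛ ℂ b).index,
        ((ℛ ℂ a).left i ⊗ₜ[ℂ] (ℛ ℂ b).left j) ⊗ₜ[ℂ]
          ((ℛ ℂ a).right i ⊗ₜ[ℂ] (ℛ ℂ b).right j) := by
  show TensorProduct.tensorTensorTensorComm ℂ H H H H
      (Coalgebra.comul (R := ℂ) a ⊗ₜ[ℂ] Coalgebra.comul (R := ℂ) b) = _
  rw [← (ℛ ℂ a).eq, ← (ℛ ℂ b).eq]
  rw [TensorProduct.sum_tmul]
  simp [TensorProduct.tmul_sum, map_sum]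

lemma counit_tmul (a b : H) :
    Coalgebra.counit (R := ℂ) (a ⊗ₜ[ℂ] b) =
      Coalgebra.counit (R := ℂ) a * Coalgebra.counit (R := ℂ) b := by
  rw [TensorProduct.counit_tmul, smul_eq_mul, mul_comm]

lemma conv_f1_f2 :
    conv H ((antipode (R := ℂ)) ∘ₗ LinearMap.mul' ℂ H) (LinearMap.mul' ℂ H) = convUnit H := by
  apply TensorProduct.ext'
  intro a b
  have hmul : Coalgebra.comul (R := ℂ) (a * b) =
      ∑ i ∈ (ℛ ℂ a).index, ∑ j ∈ (ℛ ℂ b).index,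
        ((ℛ ℂ a).left i * (ℛ ℂ b).left j) ⊗ₜ[ℂ] ((ℛ ℂ a).right i * (ℛ ℂ b).right j) := by
    rw [Bialgebra.comul_mul, ← (ℛ ℂ a).eq, ← (ℛ ℂ b).eq, Finset.sum_mul_sum]
    simp [Algebra.TensorProduct.tmul_mul_tmul]
  have key := HopfAlgebra.mul_antipode_rTensor_comul_apply (R := ℂ) (a := a * b)
  rw [hmul] at key
  simp only [map_sum, LinearMap.rTensor_tmul, LinearMap.mul'_apply] at key
  rw [conv, LinearMap.comp_apply, LinearMap.comp_apply, comul_tmul]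
  simp only [map_sum, TensorProduct.map_tmul, LinearMap.mul'_apply, LinearMap.comp_apply]
  rw [key]
  simp [convUnit, counit_tmul, Bialgebra.counit_mul]
  exact Algebra.commutes _ _

lemma conv_f2_f3 :
    conv H (LinearMap.mul' ℂ H)
      (LinearMap.mul' ℂ H ∘ₗ TensorProduct.map (antipode (R := ℂ)) (antipode (R := ℂ)) ∘ₗ
        (TensorProduct.comm ℂ H H).toLinearMap) = convUnit H := by
  apply TensorProduct.ext'
  intro a b
  rw [conv, LinearMap.comp_apply, LinearMap.comp_apply, comul_tmul]
  simp only [map_sum, TensorProduct.map_tmul, LinearMap.mul'_apply, LinearMap.comp_apply,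
    LinearEquiv.coe_coe, TensorProduct.comm_tmul]
  calc ∑ i ∈ (ℛ ℂ a).index, ∑ j ∈ (ℛ ℂ b).index,
        ((ℛ ℂ a).left i * (ℛ ℂ b).left j) *
          (antipode (R := ℂ) ((ℛ ℂ b).right j) * antipode (R := ℂ) ((ℛ ℂ a).right i))
      = ∑ i ∈ (ℛ ℂ a).index,
          Coalgebra.counit (R := ℂ) b • ((ℛ ℂ a).left i * antipode (R := ℂ) ((ℛ ℂ a).right i)) := by
        apply Finset.sum_congr rfl
        intro i _
        calc ∑ j ∈ (ℛ ℂ b).index,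
              ((ℛ ℂ a).left i * (ℛ ℂ b).left j) *
                (antipode (R := ℂ) ((ℛ ℂ b).right j) * antipode (R := ℂ) ((ℛ ℂ a).right i))
            = (ℛ ℂ a).left i *
                ((∑ j ∈ (ℛ ℂ b).index, (ℛ ℂ b).left j * antipode (R := ℂ) ((ℛ ℂ b).right j)) *
                  antipode (R := ℂ) ((ℛ ℂ a).right i)) := by
              simp only [Finset.sum_mul, Finset.mul_sum]
              exact Finset.sum_congr rfl fun j _ => by simp [mul_assoc]
          _ = Coalgebra.counit (R := ℂ) b •
                ((ℛ ℂ a).left i * antipode (R := ℂ) ((ℛ ℂ a).right i)) := by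
              rw [HopfAlgebra.sum_mul_antipode_eq_smul (ℛ ℂ b)]
              simp [smul_mul_assoc, mul_smul_comm]
    _ = convUnit H (a ⊗ₜ[ℂ] b) := by
        rw [← Finset.smul_sum, HopfAlgebra.sum_mul_antipode_eq_smul (ℛ ℂ a), smul_smul,
          mul_comm]
        simp [convUnit, counit_tmul, Algebra.algebraMap_eq_smul_one]
        rw [mul_comm]

lemma antipode_mul' (a b : H) :
    antipode (R := ℂ) (a * b) = antipode (R := ℂ) b * antipode (R := ℂ) a := by
  have heq : (antipode (R := ℂ)) ∘ₗ LinearMap.mul' ℂ H =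
      LinearMap.mul' ℂ H ∘ₗ TensorProduct.map (antipode (R := ℂ)) (antipode (R := ℂ)) ∘ₗ
        (TensorProduct.comm ℂ H H).toLinearMap := by
    calc (antipode (R := ℂ)) ∘ₗ LinearMap.mul' ℂ H
        = conv H ((antipode (R := ℂ)) ∘ₗ LinearMap.mul' ℂ H) (convUnit H) :=
          (conv_convUnit H _).symm
      _ = conv H ((antipode (R := ℂ)) ∘ₗ LinearMap.mul' ℂ H)
            (conv H (LinearMap.mul' ℂ H)
              (LinearMap.mul' ℂ H ∘ₗ TensorProduct.map (antipode (R := ℂ)) (antipode (R := ℂ)) ∘ₗ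
                (TensorProduct.comm ℂ H H).toLinearMap)) := by rw [conv_f2_f3]
      _ = conv H (conv H ((antipode (R := ℂ)) ∘ₗ LinearMap.mul' ℂ H) (LinearMap.mul' ℂ H))
            (LinearMap.mul' ℂ H ∘ₗ TensorProduct.map (antipode (R := ℂ)) (antipode (R := ℂ)) ∘ₗ
              (TensorProduct.comm ℂ H H).toLinearMap) := (conv_assoc H _ _ _).symm
      _ = conv H (convUnit H)
            (LinearMap.mul' ℂ H ∘ₗ TensorProduct.map (antipode (R := ℂ)) (antipode (R := ℂ)) ∘ₗ
              (TensorProduct.comm ℂ H H).toLinearMap) := by rw [conv_f1_f2]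
      _ = LinearMap.mul' ℂ H ∘ₗ TensorProduct.map (antipode (R := ℂ)) (antipode (R := ℂ)) ∘ₗ
            (TensorProduct.comm ℂ H H).toLinearMap := convUnit_conv H _
  have := LinearMap.congr_fun heq (a ⊗ₜ[ℂ] b)
  simpa using this

lemma antipode_one' : antipode (R := ℂ) (1 : H) = 1 := by
  have h := HopfAlgebra.mul_antipode_rTensor_comul_apply (R := ℂ) (a := (1 : H))
  rw [Bialgebra.comul_one, Algebra.TensorProduct.one_def] at h
  simpa using h

lemma crux {c : H} {ι : Type*} (r : Coalgebra.Repr ℂ c ι) :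
    ∑ j ∈ r.index, antipode (R := ℂ) (antipode (R := ℂ) (r.right j)) * antipode (R := ℂ) (r.left j)
      = Coalgebra.counit (R := ℂ) c • (1 : H) := by
  have step : ∀ j ∈ r.index,
      antipode (R := ℂ) (antipode (R := ℂ) (r.right j)) * antipode (R := ℂ) (r.left j)
        = antipode (R := ℂ) (r.left j * antipode (R := ℂ) (r.right j)) := fun j _ =>
    (antipode_mul' H _ _).symm
  rw [Finset.sum_congr rfl step, ← map_sum, HopfAlgebra.sum_mul_antipode_eq_smul r, map_smul,
    antipode_one']

end Aux

open Coalgebra HopfAlgebra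
open scoped Coalgebra

/-- For every `k ∈ H` one has `∑ S(S(k₍₂₎)) · S̃(k₍₁₎) = δ(k) 1` in `H`.
(The left-hand side is obtained from `Δk = ∑ k₍₁₎ ⊗ k₍₂₎` by flipping the two factors,
applying `S ∘ S` and `S̃` respectively, and multiplying.) -/
theorem antipode_sq_mul_twistedAntipode (δ : H →ₐ[ℂ] ℂ) :
    ∀ k : H,
      LinearMap.mul' ℂ H
        (TensorProduct.map
          (HopfAlgebra.antipode (R := ℂ) ∘ₗ HopfAlgebra.antipode (R := ℂ))
          (twistedAntipode H δ)
          ((TensorProduct.comm ℂ H H) (Coalgebra.comul (R := ℂ) k)))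
      = δ k • (1 : H) := by
  intro k
  have key := congrArg
    ((TensorProduct.lid ℂ H).toLinearMap ∘ₗ
      TensorProduct.map δ.toLinearMap
        (LinearMap.mul' ℂ H ∘ₗ
          TensorProduct.map ((antipode (R := ℂ)) ∘ₗ (antipode (R := ℂ))) (antipode (R := ℂ)) ∘ₗ
            (TensorProduct.comm ℂ H H).toLinearMap))
    (Coalgebra.sum_tmul_tmul_eq (ℛ ℂ k) (fun i => ℛ ℂ ((ℛ ℂ k).left i))
      (fun i => ℛ ℂ ((ℛ ℂ k).right i)))
  simp only [map_sum, LinearMap.comp_apply, TensorProduct.map_tmul, LinearMap.mul'_apply,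
    LinearEquiv.coe_coe, TensorProduct.comm_tmul, TensorProduct.lid_tmul] at key
  calc LinearMap.mul' ℂ H
        (TensorProduct.map
          (HopfAlgebra.antipode (R := ℂ) ∘ₗ HopfAlgebra.antipode (R := ℂ))
          (twistedAntipode H δ)
          ((TensorProduct.comm ℂ H H) (Coalgebra.comul (R := ℂ) k)))
      = ∑ i ∈ (ℛ ℂ k).index,
          antipode (R := ℂ) (antipode (R := ℂ) ((ℛ ℂ k).right i)) *
            twistedAntipode H δ ((ℛ ℂ k).left i) := by
        rw [← (ℛ ℂ k).eq]
        simp [map_sum]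
    _ = ∑ i ∈ (ℛ ℂ k).index, ∑ j ∈ (ℛ ℂ ((ℛ ℂ k).left i)).index,
          δ ((ℛ ℂ ((ℛ ℂ k).left i)).left j) •
            (antipode (R := ℂ) (antipode (R := ℂ) ((ℛ ℂ k).right i)) *
              antipode (R := ℂ) ((ℛ ℂ ((ℛ ℂ k).left i)).right j)) := by
        apply Finset.sum_congr rfl
        intro i _
        rw [twistedAntipode, LinearMap.comp_apply, LinearMap.comp_apply,
          ← (ℛ ℂ ((ℛ ℂ k).left i)).eq]
        simp [map_sum, Finset.mul_sum, mul_smul_comm]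
    _ = ∑ i ∈ (ℛ ℂ k).index, ∑ j ∈ (ℛ ℂ ((ℛ ℂ k).right i)).index,
          δ ((ℛ ℂ k).left i) •
            (antipode (R := ℂ) (antipode (R := ℂ) ((ℛ ℂ ((ℛ ℂ k).right i)).right j)) *
              antipode (R := ℂ) ((ℛ ℂ ((ℛ ℂ k).right i)).left j)) := key
    _ = ∑ i ∈ (ℛ ℂ k).index,
          δ ((ℛ ℂ k).left i) • (Coalgebra.counit (R := ℂ) ((ℛ ℂ k).right i) • (1 : H)) := by
        apply Finset.sum_congr rfl
        intro i _
        rw [← Finset.smul_sum, crux H (ℛ ℂ ((ℛ ℂ k).right i))]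
    _ = δ k • (1 : H) := by
        have : ∑ i ∈ (ℛ ℂ k).index,
            δ ((ℛ ℂ k).left i) * Coalgebra.counit (R := ℂ) ((ℛ ℂ k).right i) = δ k := by
          calc ∑ i ∈ (ℛ ℂ k).index,
                δ ((ℛ ℂ k).left i) * Coalgebra.counit (R := ℂ) ((ℛ ℂ k).right i)
              = δ (∑ i ∈ (ℛ ℂ k).index,
                  Coalgebra.counit (R := ℂ) ((ℛ ℂ k).right i) • (ℛ ℂ k).left i) := by
                simp [map_sum, mul_comm, smul_eq_mul]
            _ = δ k := by rw [sum_counit_smul_left]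
        rw [← this, Finset.sum_smul]
        apply Finset.sum_congr rfl
        intro i _
        rw [smul_smul]
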